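/- arXiv:1611.06755 — 3 statements merged into one kernel-verified Lean document; each statement's English description precedes it below -/
import Mathlib

section
/- For every function f that is 5 times continuously differentiable on a neighborhood of x_{j+1/2} = x_j + Δx/2 (with all stencil points in that neighborhood), L_{1,1}f = (1/24)(f(x_j-2Δx) - 3f(x_j-Δx) - 21f(x_j) + 23f(x_j+Δx)) satisfies |L_{1,1}f - Δx·f'(x_{j+1/2}) - (1/24)Δx⁴·f⁗(x_{j+1/2})| ≤ C·Δx⁵ for some constant C and all sufficiently small Δx > 0. -/
/-!
Expand `f` to fourth order about the midpoint `c = x_j + Δx/2`. The four stencil points are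
`c + Δx/2`, `c - Δx/2`, `c - 3Δx/2`, `c - 5Δx/2`, and on quartic Taylor polynomials about `c` the
stencil reproduces `Δx f'(c) + Δx⁴ f⁗(c)/24` exactly. What remains is a combination of four
Lagrange remainders, each `O(Δx⁵)` with a constant controlled by a bound on `f⁽⁵⁾` on a fixed
closed ball around `x_j`, which contains every stencil once `Δx` is small.
-/

open Set Nat

theorem taylorWithinEval_eq_taylorWithinEval_univ {f : ℝ → ℝ} {t : Set ℝ} {n : ℕ} {x₀ : ℝ}
    (ht : UniqueDiffOn ℝ t) (hx₀ : x₀ ∈ t) (hf : ContDiffAt ℝ n f x₀) (x : ℝ) :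
    taylorWithinEval f n t x₀ x = taylorWithinEval f n univ x₀ x := by
  simp only [taylor_within_apply, iteratedDerivWithin_univ]
  refine Finset.sum_congr rfl fun k hk => ?_
  have hkn : k ≤ n := Nat.lt_succ_iff.mp (Finset.mem_range.mp hk)
  rw [iteratedDerivWithin_eq_iteratedDeriv ht (hf.of_le (by exact_mod_cast hkn)) hx₀]

theorem abs_sub_taylorWithinEval_univ_le {f : ℝ → ℝ} {s : Set ℝ} {n : ℕ} {x₀ x M : ℝ}
    (hs : IsOpen s) (hf : ContDiffOn ℝ (n + 1) f s) (hsub : uIcc x₀ x ⊆ s)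
    (hM : ∀ y ∈ uIcc x₀ x, |iteratedDeriv (n + 1) f y| ≤ M) :
    |f x - taylorWithinEval f n univ x₀ x| ≤ M * |x - x₀| ^ (n + 1) / (n + 1)! := by
  rcases eq_or_ne x₀ x with rfl | hne
  · simp [taylorWithinEval_self]
  obtain ⟨x', hx', hlagrange⟩ := taylor_mean_remainder_lagrange_iteratedDeriv hne (hf.mono hsub)
  have hx₀ : x₀ ∈ s := hsub left_mem_uIcc
  rw [← taylorWithinEval_eq_taylorWithinEval_univ (uniqueDiffOn_uIcc hne) left_mem_uIcc
    ((hf.contDiffAt (hs.mem_nhds hx₀)).of_le (by exact_mod_cast n.le_succ)), hlagrange,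
    abs_div, abs_mul, abs_pow, Nat.abs_cast]
  gcongr
  exact hM x' (uIoo_subset_uIcc_self hx')

theorem exists_closedBall_bound_iteratedDeriv {f : ℝ → ℝ} {s : Set ℝ} {n : ℕ} {x : ℝ}
    (hs : IsOpen s) (hx : x ∈ s) (hf : ContDiffOn ℝ n f s) :
    ∃ r > 0, ∃ M > 0, Metric.closedBall x r ⊆ s ∧
      ∀ y ∈ Metric.closedBall x r, |iteratedDeriv n f y| ≤ M := by
  obtain ⟨r, hr, hball⟩ := Metric.nhds_basis_closedBall.mem_iff.mp (hs.mem_nhds hx)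
  have hcont : ContinuousOn (iteratedDeriv n f) s :=
    (hf.continuousOn_iteratedDerivWithin le_rfl hs.uniqueDiffOn).congr
      (iteratedDerivWithin_of_isOpen hs).symm
  obtain ⟨M, hM⟩ := (isCompact_closedBall x r).exists_bound_of_continuousOn (hcont.mono hball)
  exact ⟨r, hr, max M 1, by positivity, hball, fun y hy => (hM y hy).trans (le_max_left M 1)⟩

theorem weno7_L11_stencil_taylorWithinEval (f : ℝ → ℝ) (xj Δx : ℝ) :
    let T := taylorWithinEval f 4 univ (xj + Δx / 2)
    (1/24) * (T (xj - 2*Δx) - 3 * T (xj - Δx) - 21 * T xj + 23 * T (xj + Δx)) =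
      Δx * deriv f (xj + Δx/2) + (1/24) * Δx^4 * iteratedDeriv 4 f (xj + Δx/2) := by
  simp only [taylor_within_apply, Finset.sum_range_succ, Finset.sum_range_zero,
    iteratedDerivWithin_univ, iteratedDeriv_one, smul_eq_mul]
  norm_num [Nat.factorial]
  ring

theorem weno7_L11_expansion
    (f : ℝ → ℝ) (xj : ℝ)
    (hf : ∃ s : Set ℝ, IsOpen s ∧ xj ∈ s ∧ ContDiffOn ℝ 5 f s) :
    ∃ C δ : ℝ, 0 < C ∧ 0 < δ ∧ ∀ Δx : ℝ, 0 < Δx → Δx < δ →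
      |(1/24) * (f (xj - 2*Δx) - 3 * f (xj - Δx) - 21 * f xj + 23 * f (xj + Δx))
        - Δx * deriv f (xj + Δx/2)
        - (1/24) * Δx^4 * iteratedDeriv 4 f (xj + Δx/2)| ≤ C * Δx^5 := by
  obtain ⟨s, hs, hxj, hf5⟩ := hf
  obtain ⟨r, hr, M, hM, hball, hbound⟩ := exists_closedBall_bound_iteratedDeriv hs hxj hf5
  -- Each remainder is at most `M Δx⁵` because `(5/2)⁵ / 5! < 1`; the stencil weights sum to `48/24`.
  refine ⟨2 * M, r / 3, by positivity, by positivity, fun Δx hΔx hΔxr => ?_⟩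
  set c := xj + Δx / 2 with hc
  set T := taylorWithinEval f 4 univ c
  have hremainder : ∀ y, |y - c| ≤ 5/2 * Δx → |f y - T y| ≤ M * Δx^5 := by
    intro y hy
    have hsub : uIcc c y ⊆ Metric.closedBall xj r := by
      rw [Real.closedBall_eq_Icc]
      obtain ⟨hy₁, hy₂⟩ := abs_le.mp hy
      exact uIcc_subset_Icc ⟨by linarith, by linarith⟩ ⟨by linarith, by linarith⟩
    calc |f y - T y| ≤ M * |y - c| ^ (4 + 1) / (4 + 1)! :=
          abs_sub_taylorWithinEval_univ_le hs hf5 (hsub.trans hball) fun z hz => hbound z (hsub hz)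
      _ ≤ M * (5/2 * Δx) ^ (4 + 1) / (4 + 1)! := by gcongr
      _ ≤ M * Δx ^ 5 := by
          norm_num [Nat.factorial]
          nlinarith [pow_pos hΔx 5]
  have hstencil : (1/24) * (T (xj - 2*Δx) - 3 * T (xj - Δx) - 21 * T xj + 23 * T (xj + Δx)) =
      Δx * deriv f c + (1/24) * Δx^4 * iteratedDeriv 4 f c :=
    weno7_L11_stencil_taylorWithinEval f xj Δx
  have h₁ := hremainder (xj - 2*Δx) (abs_le.mpr ⟨by linarith, by linarith⟩)
  have h₂ := hremainder (xj - Δx) (abs_le.mpr ⟨by linarith, by linarith⟩)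
  have h₃ := hremainder xj (abs_le.mpr ⟨by linarith, by linarith⟩)
  have h₄ := hremainder (xj + Δx) (abs_le.mpr ⟨by linarith, by linarith⟩)
  rw [abs_le] at h₁ h₂ h₃ h₄ ⊢
  constructor <;> linarith [h₁.1, h₁.2, h₂.1, h₂.2, h₃.1, h₃.2, h₄.1, h₄.2]
end

section
/- Let d_k > 0 (k = 0,...,3) with Σ d_k = 1, and suppose β_k: (0,δ) → ℝ_{>0} and ζ: (0,δ) → ℝ_{≥0} satisfy ζ(Δx)/β_k(Δx)² = O(Δx⁴) for each k as Δx → 0⁺. Define α_k = d_k(1 + ζ/β_k²) and ω_k = α_k/Σ_q α_q. Then ω_k - d_k = O(Δx⁴) for each k. -/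
/-! With `ε q = ζ / β q ^ 2 ≥ 0` and `T = ∑ q, d q * ε q`, the normalisation `∑ d = 1` gives
`∑ q, α q = 1 + T`, hence `ω k - d k = d k * (ε k - T) / (1 + T)`. Both `ε k` and `T` lie in
`[0, C * Δx ^ 4]` for a common `C`, and `1 + T ≥ 1`, so `|ω k - d k| ≤ C * d k * Δx ^ 4`. -/

open Finset

section NormalizedWeights

variable {ι : Type*} [Fintype ι] {d ε : ι → ℝ}

theorem sum_mul_one_add_eq (hsum : ∑ q, d q = 1) :
    ∑ q, d q * (1 + ε q) = 1 + ∑ q, d q * ε q := by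
  simp only [mul_one_add, sum_add_distrib, hsum]

theorem normalized_sub_eq (hsum : ∑ q, d q = 1) (hT : 1 + ∑ q, d q * ε q ≠ 0) (k : ι) :
    d k * (1 + ε k) / ∑ q, d q * (1 + ε q) - d k
      = d k * (ε k - ∑ q, d q * ε q) / (1 + ∑ q, d q * ε q) := by
  rw [sum_mul_one_add_eq hsum]
  field_simp
  ring

theorem abs_normalized_sub_le (hd : ∀ q, 0 ≤ d q) (hsum : ∑ q, d q = 1) (hε : ∀ q, 0 ≤ ε q)
    {c : ℝ} (hεc : ∀ q, ε q ≤ c) (k : ι) :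
    |d k * (1 + ε k) / ∑ q, d q * (1 + ε q) - d k| ≤ c * d k := by
  have hT : 0 ≤ ∑ q, d q * ε q := sum_nonneg fun q _ => mul_nonneg (hd q) (hε q)
  rw [normalized_sub_eq hsum (by linarith)]
  set T := ∑ q, d q * ε q
  have hTc : T ≤ c :=
    calc T ≤ ∑ q, d q * c := sum_le_sum fun q _ => mul_le_mul_of_nonneg_left (hεc q) (hd q)
      _ = c := by rw [← sum_mul, hsum, one_mul]
  have hdiff : |ε k - T| ≤ c := abs_sub_le_iff.2 ⟨by linarith [hεc k], by linarith [hε k]⟩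
  rw [abs_div, abs_mul, abs_of_nonneg (hd k), abs_of_pos (by linarith : (0:ℝ) < 1 + T),
    div_le_iff₀ (by linarith)]
  nlinarith [mul_le_mul_of_nonneg_left hdiff (hd k), mul_nonneg (hd k) hT, hε k, hεc k]

end NormalizedWeights

theorem exists_pos_forall_le_mul {ι : Type*} [Fintype ι] {f : ι → ℝ → ℝ} {g : ℝ → ℝ} {s : Set ℝ}
    (hg : ∀ x ∈ s, 0 ≤ g x) (hf : ∀ i, ∃ C : ℝ, ∀ x ∈ s, f i x ≤ C * g x) :
    ∃ C : ℝ, 0 < C ∧ ∀ i, ∀ x ∈ s, f i x ≤ C * g x := by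
  choose C hC using hf
  refine ⟨∑ i, |C i| + 1, by positivity, fun i x hx => (hC i x hx).trans ?_⟩
  have hCi : C i ≤ ∑ j, |C j| + 1 :=
    calc C i ≤ |C i| := le_abs_self _
      _ ≤ ∑ j, |C j| := single_le_sum (fun j _ => abs_nonneg (C j)) (mem_univ i)
      _ ≤ ∑ j, |C j| + 1 := by linarith
  exact mul_le_mul_of_nonneg_right hCi (hg x hx)

theorem weno7_sufficient_condition_general
    (d : Fin 4 → ℝ) (hd : ∀ k, 0 < d k) (hsum : ∑ k, d k = 1)
    (δ : ℝ) (hδ : 0 < δ)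
    (β : Fin 4 → ℝ → ℝ) (ζ : ℝ → ℝ)
    (hζ : ∀ Δx ∈ Set.Ioo (0:ℝ) δ, 0 ≤ ζ Δx)
    (hO : ∀ k, ∃ C : ℝ, ∀ Δx ∈ Set.Ioo (0:ℝ) δ, ζ Δx / (β k Δx)^2 ≤ C * Δx^4)
    (α ω : Fin 4 → ℝ → ℝ)
    (hα : ∀ k, ∀ Δx, α k Δx = d k * (1 + ζ Δx / (β k Δx)^2))
    (hω : ∀ k, ∀ Δx, ω k Δx = α k Δx / ∑ q, α q Δx) :
    ∀ k, ∃ C δ' : ℝ, 0 < C ∧ 0 < δ' ∧ ∀ Δx : ℝ, 0 < Δx → Δx < δ' →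
      |ω k Δx - d k| ≤ C * Δx^4 := by
  intro k
  obtain ⟨C, hC, hCζ⟩ := exists_pos_forall_le_mul (fun Δx _ => by positivity) hO
  refine ⟨C * d k, δ, by positivity [hd k], hδ, fun Δx hpos hlt => ?_⟩
  have hΔx : Δx ∈ Set.Ioo 0 δ := ⟨hpos, hlt⟩
  have hbound := abs_normalized_sub_le (fun q => (hd q).le) hsum
    (fun q => div_nonneg (hζ Δx hΔx) (sq_nonneg (β q Δx))) (fun q => hCζ q Δx hΔx) k
  simp only [hω, hα]
  linarith

theorem weno7_sufficient_condition
    (d : Fin 4 → ℝ) (hd : ∀ k, 0 < d k) (hsum : ∑ k, d k = 1)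
    (δ : ℝ) (hδ : 0 < δ)
    (β : Fin 4 → ℝ → ℝ) (ζ : ℝ → ℝ)
    (hβ : ∀ k, ∀ Δx ∈ Set.Ioo (0:ℝ) δ, 0 < β k Δx)
    (hζ : ∀ Δx ∈ Set.Ioo (0:ℝ) δ, 0 ≤ ζ Δx)
    (hO : ∀ k, ∃ C : ℝ, ∀ Δx ∈ Set.Ioo (0:ℝ) δ, ζ Δx / (β k Δx)^2 ≤ C * Δx^4)
    (α ω : Fin 4 → ℝ → ℝ)
    (hα : ∀ k, ∀ Δx, α k Δx = d k * (1 + ζ Δx / (β k Δx)^2))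
    (hω : ∀ k, ∀ Δx, ω k Δx = α k Δx / ∑ q, α q Δx) :
    ∀ k, ∃ C δ' : ℝ, 0 < C ∧ 0 < δ' ∧ ∀ Δx : ℝ, 0 < Δx → Δx < δ' →
      |ω k Δx - d k| ≤ C * Δx^4 :=
  weno7_sufficient_condition_general d hd hsum δ hδ β ζ hζ hO α ω hα hω
end

section
/- Let f be 5 times continuously differentiable near x_{j+1/2} = x_j + Δx/2. Define β₀ and β₃ as in the WENO-NS7 scheme with parameters ξ₁, ξ₂ ∈ (0,1]. Then ζ = |β₀ - β₃|² = O(Δx⁸) as Δx → 0⁺ whenever f'(x_{j+1/2}), f''(x_{j+1/2}), f'''(x_{j+1/2}) do not change the sign pattern entering the absolute values; in particular, if f', f'', f''' are all nonzero at x_{j+1/2}, there exists C with ζ ≤ C·Δx⁸ for all sufficiently small Δx > 0. -/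
/-!
The reverse triangle inequality `||a| - |b|| ≤ |a - b|` reduces `β₀ - β₃` to the three
differences `L_{s,0} - L_{s,3}` of undivided differences. Each of them is a seven-point stencil
`∑ cᵢ f (x + kᵢ Δx)` whose moments `∑ cᵢ kᵢ ^ j` vanish for `j ≤ 3`, so it kills the cubic Taylor
polynomial of `f` at `x` and is `O(Δx⁴)` by Taylor's theorem; squaring gives `O(Δx⁸)`.
-/

open Asymptotics Filter Finset Topology
open scoped Nat

section Taylor

variable {E : Type*} [NormedAddCommGroup E] [NormedSpace ℝ E]

theorem ContDiffAt.isBigO_sub_taylor {f : ℝ → E} {x₀ : ℝ} {n : ℕ}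
    (hf : ContDiffAt ℝ (n + 1) f x₀) :
    (fun t ↦ f (x₀ + t) - ∑ j ∈ range (n + 1), (t ^ j / j !) • iteratedDeriv j f x₀)
      =O[𝓝 0] (· ^ (n + 1)) := by
  obtain ⟨ε, hε, hball⟩ := Metric.eventually_nhds_iff_ball.1 (hf.eventually (by simp))
  have hx₀ : x₀ ∈ Metric.ball x₀ ε := Metric.mem_ball_self hε
  have hlittle := taylor_isLittleO (convex_ball x₀ ε) hx₀
    (fun y hy ↦ (hball y hy).contDiffWithinAt : ContDiffOn ℝ ↑(n + 1) f _)
  rw [nhdsWithin_eq_nhds.2 (Metric.ball_mem_nhds x₀ hε)] at hlittle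
  have htop : (fun x ↦ taylorWithinEval f (n + 1) (Metric.ball x₀ ε) x₀ x
      - taylorWithinEval f n (Metric.ball x₀ ε) x₀ x) =O[𝓝 x₀] fun x ↦ (x - x₀) ^ (n + 1) := by
    refine .of_bound
      ‖(((n + 1 : ℝ) * n !)⁻¹) • iteratedDerivWithin (n + 1) f (Metric.ball x₀ ε) x₀‖
      (.of_forall fun x ↦ ?_)
    rw [taylorWithinEval_succ, add_sub_cancel_left, mul_smul, smul_comm, norm_smul, mul_comm]
  have hbig := (hlittle.isBigO.add htop).comp_tendsto
    ((continuous_const_add x₀).tendsto' 0 x₀ (add_zero x₀))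
  refine hbig.congr (fun t ↦ ?_) (fun t ↦ by simp)
  simp only [Function.comp_apply]
  rw [sub_add_sub_cancel, taylor_within_apply, add_sub_cancel_left]
  congr 1
  refine sum_congr rfl fun j _ ↦ ?_
  rw [iteratedDerivWithin_of_isOpen Metric.isOpen_ball hx₀, div_eq_inv_mul]

theorem ContDiffAt.isBigO_stencil_of_moments_eq_zero {ι : Type*} [Fintype ι] (c k : ι → ℝ)
    {n : ℕ} (hc : ∀ j ≤ n, ∑ i, c i * k i ^ j = 0) {f : ℝ → E} {x₀ : ℝ}
    (hf : ContDiffAt ℝ (n + 1) f x₀) :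
    (fun h ↦ ∑ i, c i • f (x₀ + k i * h)) =O[𝓝 0] (· ^ (n + 1)) := by
  set P : ℝ → E := fun t ↦ ∑ j ∈ range (n + 1), (t ^ j / j !) • iteratedDeriv j f x₀
  have hP : ∀ h, ∑ i, c i • P (k i * h) = 0 := fun h ↦ by
    simp only [P, smul_sum, smul_smul]
    rw [sum_comm]
    refine sum_eq_zero fun j hj ↦ ?_
    rw [← sum_smul]
    calc (∑ i, c i * ((k i * h) ^ j / j !)) • iteratedDeriv j f x₀
        = ((∑ i, c i * k i ^ j) * (h ^ j / j !)) • iteratedDeriv j f x₀ := by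
          rw [sum_mul]; congr 1; refine sum_congr rfl fun i _ ↦ ?_; ring
      _ = 0 := by rw [hc j (Nat.lt_succ_iff.1 (mem_range.1 hj)), zero_mul, zero_smul]
  have hterm : ∀ i, (fun h ↦ c i • (f (x₀ + k i * h) - P (k i * h))) =O[𝓝 0] (· ^ (n + 1)) :=
    fun i ↦ ((hf.isBigO_sub_taylor.comp_tendsto
      ((continuous_const_mul (k i)).tendsto' 0 0 (mul_zero _))).const_smul_left (c i)).trans
      (by simpa only [Function.comp_def, mul_pow] using
        (isBigO_refl (· ^ (n + 1)) (𝓝 (0 : ℝ))).const_mul_left (k i ^ (n + 1)))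
  refine (IsBigO.fun_sum (s := univ) fun i _ ↦ hterm i).congr' (.of_forall fun h ↦ ?_) .rfl
  simp only [smul_sub, sum_sub_distrib, hP, sub_zero]

end Taylor

theorem Asymptotics.IsBigO.exists_pos_bound_of_pow {F : Type*} [Norm F] {u : ℝ → F} {n : ℕ}
    (hu : u =O[𝓝 0] (· ^ n)) :
    ∃ C δ : ℝ, 0 < C ∧ 0 < δ ∧ ∀ x : ℝ, 0 < x → x < δ → ‖u x‖ ≤ C * x ^ n := by
  obtain ⟨C, hC, hCu⟩ := hu.exists_pos
  obtain ⟨δ, hδ, hball⟩ := Metric.eventually_nhds_iff_ball.1 hCu.bound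
  refine ⟨C, δ, hC, hδ, fun x hx hxδ ↦ ?_⟩
  have := hball x (by simpa [abs_of_pos hx] using hxδ)
  rwa [norm_pow, Real.norm_of_nonneg hx.le] at this

theorem isBigO_abs_sub_abs {α : Type*} {l : Filter α} {a b : α → ℝ} :
    (fun x ↦ |a x| - |b x|) =O[l] (fun x ↦ a x - b x) :=
  .of_bound' (.of_forall fun _ ↦ abs_abs_sub_abs_le_abs_sub _ _)

theorem isBigO_weighted_abs_sub {α : Type*} {l : Filter α} {g : α → ℝ}
    {a₁ a₂ a₃ b₁ b₂ b₃ : α → ℝ} (w₁ w₂ : ℝ)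
    (h₁ : (fun x ↦ a₁ x - b₁ x) =O[l] g) (h₂ : (fun x ↦ a₂ x - b₂ x) =O[l] g)
    (h₃ : (fun x ↦ a₃ x - b₃ x) =O[l] g) :
    (fun x ↦ (w₁ * |a₁ x| + w₂ * |a₂ x| + |a₃ x|) - (w₁ * |b₁ x| + w₂ * |b₂ x| + |b₃ x|))
      =O[l] g := by
  refine ((((isBigO_abs_sub_abs.trans h₁).const_mul_left w₁).add
    ((isBigO_abs_sub_abs.trans h₂).const_mul_left w₂)).add
    (isBigO_abs_sub_abs.trans h₃)).congr_left fun x ↦ ?_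
  ring

section WENO7

variable {f : ℝ → ℝ} {x : ℝ}

theorem weno7_firstDifference_isBigO (hf : ContDiffAt ℝ 4 f x) :
    (fun h ↦ (1/24) * (-23 * f (x - 3*h) + 93 * f (x - 2*h) - 141 * f (x - h) + 71 * f x)
      - (1/24) * (-23 * f x + 21 * f (x + h) + 3 * f (x + 2*h) - f (x + 3*h)))
      =O[𝓝 0] (· ^ 4) := by
  refine (ContDiffAt.isBigO_stencil_of_moments_eq_zero (n := 3)
    ![-23/24, 93/24, -141/24, 94/24, -21/24, -3/24, 1/24] ![-3, -2, -1, 0, 1, 2, 3]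
    ?_ hf).congr_left fun h ↦ ?_
  · intro j hj
    interval_cases j <;> norm_num [Fin.sum_univ_succ]
  · simp only [Fin.sum_univ_seven, Matrix.cons_val, smul_eq_mul]
    ring_nf

theorem weno7_secondDifference_isBigO (hf : ContDiffAt ℝ 4 f x) :
    (fun h ↦ (1/2) * (-3 * f (x - 3*h) + 11 * f (x - 2*h) - 13 * f (x - h) + 5 * f x)
      - (1/2) * (3 * f x - 7 * f (x + h) + 5 * f (x + 2*h) - f (x + 3*h)))
      =O[𝓝 0] (· ^ 4) := by
  refine (ContDiffAt.isBigO_stencil_of_moments_eq_zero (n := 3)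
    ![-3/2, 11/2, -13/2, 1, 7/2, -5/2, 1/2] ![-3, -2, -1, 0, 1, 2, 3]
    ?_ hf).congr_left fun h ↦ ?_
  · intro j hj
    interval_cases j <;> norm_num [Fin.sum_univ_succ]
  · simp only [Fin.sum_univ_seven, Matrix.cons_val, smul_eq_mul]
    ring_nf

theorem weno7_thirdDifference_isBigO (hf : ContDiffAt ℝ 4 f x) :
    (fun h ↦ (-f (x - 3*h) + 3 * f (x - 2*h) - 3 * f (x - h) + f x)
      - (-f x + 3 * f (x + h) - 3 * f (x + 2*h) + f (x + 3*h)))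
      =O[𝓝 0] (· ^ 4) := by
  refine (ContDiffAt.isBigO_stencil_of_moments_eq_zero (n := 3)
    ![-1, 3, -3, 2, -3, 3, -1] ![-3, -2, -1, 0, 1, 2, 3]
    ?_ hf).congr_left fun h ↦ ?_
  · intro j hj
    interval_cases j <;> norm_num [Fin.sum_univ_succ]
  · simp only [Fin.sum_univ_seven, Matrix.cons_val, smul_eq_mul]
    ring_nf

end WENO7

theorem weno7_global_indicator_eighth_order_general
    (f : ℝ → ℝ) (xj : ℝ) (ξ₁ ξ₂ : ℝ)
    (hf : ∃ s : Set ℝ, IsOpen s ∧ xj ∈ s ∧ ContDiffOn ℝ 5 f s)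
    (β₀ β₃ : ℝ → ℝ)
    (hβ₀ : ∀ Δx : ℝ, β₀ Δx =
      ξ₁ * |(1/24) * (-23 * f (xj - 3*Δx) + 93 * f (xj - 2*Δx) - 141 * f (xj - Δx) + 71 * f xj)|
      + ξ₂ * |(1/2) * (-3 * f (xj - 3*Δx) + 11 * f (xj - 2*Δx) - 13 * f (xj - Δx) + 5 * f xj)|
      + |(-f (xj - 3*Δx) + 3 * f (xj - 2*Δx) - 3 * f (xj - Δx) + f xj)|)
    (hβ₃ : ∀ Δx : ℝ, β₃ Δx =
      ξ₁ * |(1/24) * (-23 * f xj + 21 * f (xj + Δx) + 3 * f (xj + 2*Δx) - f (xj + 3*Δx))|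
      + ξ₂ * |(1/2) * (3 * f xj - 7 * f (xj + Δx) + 5 * f (xj + 2*Δx) - f (xj + 3*Δx))|
      + |(-f xj + 3 * f (xj + Δx) - 3 * f (xj + 2*Δx) + f (xj + 3*Δx))|) :
    ∃ C δ : ℝ, 0 < C ∧ 0 < δ ∧ ∀ Δx : ℝ, 0 < Δx → Δx < δ →
      |β₀ Δx - β₃ Δx|^2 ≤ C * Δx^8 := by
  obtain ⟨s, hs, hxs, hf5⟩ := hf
  have hf4 : ContDiffAt ℝ 4 f xj := (hf5.contDiffAt (hs.mem_nhds hxs)).of_le (by norm_num)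
  have hβ : (fun Δx ↦ β₀ Δx - β₃ Δx) =O[𝓝 0] (· ^ 4) := by
    simpa only [hβ₀, hβ₃] using isBigO_weighted_abs_sub ξ₁ ξ₂
      (weno7_firstDifference_isBigO hf4) (weno7_secondDifference_isBigO hf4)
      (weno7_thirdDifference_isBigO hf4)
  have hζ : (fun Δx ↦ |β₀ Δx - β₃ Δx| ^ 2) =O[𝓝 0] (· ^ 8) := by
    simpa only [Real.norm_eq_abs, ← pow_mul] using hβ.norm_left.pow 2
  obtain ⟨C, δ, hC, hδ, hbound⟩ := hζ.exists_pos_bound_of_pow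
  exact ⟨C, δ, hC, hδ, fun Δx hpos hlt ↦ by simpa using hbound Δx hpos hlt⟩

theorem weno7_global_indicator_eighth_order
    (f : ℝ → ℝ) (xj : ℝ) (ξ₁ ξ₂ : ℝ)
    (hξ₁ : ξ₁ ∈ Set.Ioc (0:ℝ) 1) (hξ₂ : ξ₂ ∈ Set.Ioc (0:ℝ) 1)
    (hf : ∃ s : Set ℝ, IsOpen s ∧ xj ∈ s ∧ ContDiffOn ℝ 5 f s)
    (h1 : deriv f xj ≠ 0) (h2 : iteratedDeriv 2 f xj ≠ 0)
    (h3 : iteratedDeriv 3 f xj ≠ 0)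
    (β₀ β₃ : ℝ → ℝ)
    (hβ₀ : ∀ Δx : ℝ, β₀ Δx =
      ξ₁ * |(1/24) * (-23 * f (xj - 3*Δx) + 93 * f (xj - 2*Δx) - 141 * f (xj - Δx) + 71 * f xj)|
      + ξ₂ * |(1/2) * (-3 * f (xj - 3*Δx) + 11 * f (xj - 2*Δx) - 13 * f (xj - Δx) + 5 * f xj)|
      + |(-f (xj - 3*Δx) + 3 * f (xj - 2*Δx) - 3 * f (xj - Δx) + f xj)|)
    (hβ₃ : ∀ Δx : ℝ, β₃ Δx =
      ξ₁ * |(1/24) * (-23 * f xj + 21 * f (xj + Δx) + 3 * f (xj + 2*Δx) - f (xj + 3*Δx))|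
      + ξ₂ * |(1/2) * (3 * f xj - 7 * f (xj + Δx) + 5 * f (xj + 2*Δx) - f (xj + 3*Δx))|
      + |(-f xj + 3 * f (xj + Δx) - 3 * f (xj + 2*Δx) + f (xj + 3*Δx))|) :
    ∃ C δ : ℝ, 0 < C ∧ 0 < δ ∧ ∀ Δx : ℝ, 0 < Δx → Δx < δ →
      |β₀ Δx - β₃ Δx|^2 ≤ C * Δx^8 :=
  weno7_global_indicator_eighth_order_general f xj ξ₁ ξ₂ hf β₀ β₃ hβ₀ hβ₃
end
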